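/- arXiv:1703.06405 — 5 statements merged into one kernel-verified Lean document; each statement's English description precedes it below -/
import Mathlib

section
/- Let 0 < q < 1. On ℓ²(ℤ≥0) with S the unilateral shift, C₄ e_k = √(1−q^{4k}) e_k, and D e_k = q^k e_k, the operators z₁₁ = −q^{-1} e^{2iφ} S* C₄, z₂₁ = e^{iφ} D², z₂₂ = C₄ S (for any φ ∈ [0,2π)) satisfy the commutation relations z₁₁ z₂₁ = q² z₂₁ z₁₁, z₂₁ z₂₂ = q² z₂₂ z₂₁, and z₁₁ z₂₂ − z₂₂ z₁₁ = q(q² − q^{-2}) z₂₁². -/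
/-!
On the basis `e k`, `z₁₁` is a lowering weighted shift, `z₂₁` is diagonal with weights
`e^{iφ} q^{2k}` and `z₂₂` is a raising weighted shift. The weights of `z₂₁` grow geometrically
with ratio `q²`, which gives the two `q²`-commutation relations, and the commutator of a lowering
and a raising shift is diagonal with telescoping entries: here differences of
`√(1 - q^{4k})² = 1 - q^{4k}`, which are multiples of `q^{4k}`, the weights of `z₂₁²`.
-/

noncomputable section
open ContinuousLinearMap Complex

/-- ℓ²(ℤ≥0) -/
abbrev H : Type := lp (fun _ : ℕ => ℂ) 2

/-- standard orthonormal basis vector e_k -/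
def e (k : ℕ) : H := lp.single 2 k 1

lemma default_hilbertBasis_apply (k : ℕ) : (default : HilbertBasis ℕ ℂ H) k = e k := by
  classical
  rw [← HilbertBasis.repr_symm_single]
  rfl

lemma ext_e {T T' : H →L[ℂ] H} (h : ∀ k, T (e k) = T' (e k)) : T = T' := by
  refine ContinuousLinearMap.ext_on
    (Submodule.dense_iff_topologicalClosure_eq_top.mpr (default : HilbertBasis ℕ ℂ H).dense_span) ?_
  rintro _ ⟨k, rfl⟩
  rw [default_hilbertBasis_apply]
  exact h k

lemma ext_inner_e {x y : H} (h : ∀ j, inner ℂ (e j) x = inner ℂ (e j) y) : x = y := by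
  classical
  refine lp.ext (funext fun j => ?_)
  simpa [e, lp.inner_single_left] using h j

lemma inner_e_e (j k : ℕ) : inner ℂ (e j) (e k) = if k = j then 1 else 0 := by
  classical
  simp [e, lp.inner_single_left, lp.single_apply, eq_comm, Pi.single_apply]

lemma adjoint_apply_e_succ {S : H →L[ℂ] H} (hS : ∀ k, S (e k) = e (k + 1)) (k : ℕ) :
    adjoint S (e (k + 1)) = e k :=
  ext_inner_e fun j => by simp [adjoint_inner_right, hS, inner_e_e]

lemma ofReal_sqrt_one_sub_pow_sq {q : ℝ} (hq0 : 0 ≤ q) (hq1 : q ≤ 1) (n : ℕ) :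
    ((√(1 - q ^ n) : ℝ) : ℂ) ^ 2 = 1 - (q : ℂ) ^ n := by
  rw [← ofReal_pow, Real.sq_sqrt (sub_nonneg.mpr (pow_le_one₀ hq0 hq1))]
  push_cast
  rfl

section WeightedShifts

variable {L R B T : H →L[ℂ] H} {ℓ ρ β t : ℕ → ℂ}

lemma lowering_mul_diagonal (hL : ∀ k, L (e (k + 1)) = ℓ k • e k) (hL0 : L (e 0) = 0)
    (hB : ∀ k, B (e k) = β k • e k) {x : ℂ} (hβ : ∀ k, β (k + 1) = x * β k) :
    L * B = x • (B * L) := by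
  refine ext_e fun k => ?_
  cases k with
  | zero => simp [hB, hL0]
  | succ k => simp [hB, hL, hβ, smul_smul, mul_comm, mul_left_comm]

lemma diagonal_mul_raising (hR : ∀ k, R (e k) = ρ k • e (k + 1))
    (hB : ∀ k, B (e k) = β k • e k) {x : ℂ} (hβ : ∀ k, β (k + 1) = x * β k) :
    B * R = x • (R * B) :=
  ext_e fun k => by simp [hB, hR, hβ, smul_smul, mul_comm, mul_left_comm]

lemma lowering_mul_raising_sub_raising_mul_lowering (hL : ∀ k, L (e (k + 1)) = ℓ k • e k)
    (hL0 : L (e 0) = 0) (hR : ∀ k, R (e k) = ρ k • e (k + 1)) (hT : ∀ k, T (e k) = t k • e k)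
    (ht0 : ℓ 0 * ρ 0 = t 0) (ht : ∀ k, ℓ (k + 1) * ρ (k + 1) - ℓ k * ρ k = t (k + 1)) :
    L * R - R * L = T := by
  refine ext_e fun k => ?_
  cases k with
  | zero => simp [hR, hL, hL0, hT, smul_smul, ← ht0, mul_comm]
  | succ k => simp [hR, hL, hT, smul_smul, ← ht, sub_smul, mul_comm]

end WeightedShifts

theorem stmt3_general (q : ℝ) (hq : 0 < q) (hq1 : q < 1) (φ : ℝ)
    (S C4 D : H →L[ℂ] H)
    (hS : ∀ k, S (e k) = e (k + 1))
    (hC4 : ∀ k, C4 (e k) = ((Real.sqrt (1 - q ^ (4 * k)) : ℝ) : ℂ) • e k)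
    (hD : ∀ k, D (e k) = ((q ^ k : ℝ) : ℂ) • e k)
    (z11 z21 z22 : H →L[ℂ] H)
    (hz11 : z11 = (-(q⁻¹ : ℂ) * Complex.exp (2 * φ * Complex.I)) • (adjoint S * C4))
    (hz21 : z21 = Complex.exp (φ * Complex.I) • (D * D))
    (hz22 : z22 = C4 * S) :
    z11 * z21 = ((q : ℂ) ^ 2) • (z21 * z11)
    ∧ z21 * z22 = ((q : ℂ) ^ 2) • (z22 * z21)
    ∧ z11 * z22 - z22 * z11 = ((q : ℂ) * ((q : ℂ) ^ 2 - (q : ℂ)⁻¹ ^ 2)) • z21 ^ 2 := by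
  have hq0 : (q : ℂ) ≠ 0 := ofReal_ne_zero.mpr hq.ne'
  set w := exp (φ * I)
  set s : ℕ → ℂ := fun k => ((√(1 - q ^ (4 * k)) : ℝ) : ℂ)
  set c : ℂ := -(q⁻¹ : ℂ) * w ^ 2
  set κ : ℂ := q * (q ^ 2 - (q : ℂ)⁻¹ ^ 2)
  have hs (k : ℕ) : s k ^ 2 = 1 - (q : ℂ) ^ (4 * k) := ofReal_sqrt_one_sub_pow_sq hq.le hq1.le _
  have hw : exp (2 * φ * I) = w ^ 2 := by rw [← exp_nat_mul]; ring_nf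
  have h21 (k : ℕ) : z21 (e k) = (w * (q : ℂ) ^ (2 * k)) • e k := by
    simp only [hz21, smul_apply, mul_apply_eq_comp, hD, map_smul, smul_smul]
    push_cast
    ring_nf
  have h22 (k : ℕ) : z22 (e k) = s (k + 1) • e (k + 1) := by simp [hz22, hS, hC4, s]
  have h11 (k : ℕ) : z11 (e (k + 1)) = (c * s (k + 1)) • e k := by
    simp only [hz11, hw, smul_apply, mul_apply_eq_comp, hC4, map_smul,
      adjoint_apply_e_succ hS, smul_smul, c, s]
  have h110 : z11 (e 0) = 0 := by simp [hz11, hC4]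
  have hgeom (k : ℕ) : w * (q : ℂ) ^ (2 * (k + 1)) = q ^ 2 * (w * q ^ (2 * k)) := by ring
  have hT (k : ℕ) : (κ • z21 ^ 2) (e k) = (κ * (w * (q : ℂ) ^ (2 * k)) ^ 2) • e k := by
    simp only [smul_apply, pow_two, mul_apply_eq_comp, h21, map_smul, smul_smul]
  refine ⟨lowering_mul_diagonal h11 h110 h21 hgeom, diagonal_mul_raising h22 h21 hgeom,
    lowering_mul_raising_sub_raising_mul_lowering h11 h110 h22 hT ?_ fun k => ?_⟩
  all_goals
    simp only [c, κ]
    field_simp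
  · linear_combination (-w ^ 2) * hs 1
  · linear_combination (-w ^ 2) * hs (k + 2) + w ^ 2 * hs (k + 1)

theorem stmt3 (q : ℝ) (hq : 0 < q) (hq1 : q < 1) (φ : ℝ) (hφ : φ ∈ Set.Ico 0 (2 * Real.pi))
    (S C4 D : H →L[ℂ] H)
    (hS : ∀ k, S (e k) = e (k + 1))
    (hC4 : ∀ k, C4 (e k) = ((Real.sqrt (1 - q ^ (4 * k)) : ℝ) : ℂ) • e k)
    (hD : ∀ k, D (e k) = ((q ^ k : ℝ) : ℂ) • e k)
    (z11 z21 z22 : H →L[ℂ] H)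
    (hz11 : z11 = (-(q⁻¹ : ℂ) * Complex.exp (2 * φ * Complex.I)) • (adjoint S * C4))
    (hz21 : z21 = Complex.exp (φ * Complex.I) • (D * D))
    (hz22 : z22 = C4 * S) :
    z11 * z21 = ((q : ℂ) ^ 2) • (z21 * z11)
    ∧ z21 * z22 = ((q : ℂ) ^ 2) • (z22 * z21)
    ∧ z11 * z22 - z22 * z11 = ((q : ℂ) * ((q : ℂ) ^ 2 - (q : ℂ)⁻¹ ^ 2)) • z21 ^ 2 :=
  stmt3_general q hq hq1 φ S C4 D hS hC4 hD z11 z21 z22 hz11 hz21 hz22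
end
end

section
/- Let 0 < q < 1 and φ ∈ ℝ. On ℓ²(ℤ≥0), the operators z₁₁ = q^{-1} C₄ S, z₂₁ = 0, z₂₂ = e^{iφ}·I satisfy all nine defining relations of Pol(Mat₂^sym)_q, giving the representation ν_φ. -/
/-!
`z₁₁` is the weighted shift `e k ↦ q⁻¹ √(1 - q^(4(k+1))) • e (k+1)`, so `z₁₁* z₁₁` and `z₁₁ z₁₁*` are
diagonal with entries `q⁻² (1 - q^(4k+4))` and `q⁻² (1 - q^(4k))` (the latter vanishing at `k = 0`
because `z₁₁*` kills `e 0`). Hence `z₁₁* z₁₁ = q⁴ z₁₁ z₁₁* + (q⁻² - q²)`, which is the fourth relation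
once `z₂₂ z₂₂* = 1` is used: `z₂₂` is a unimodular scalar. The other relations are immediate since
`z₂₁ = 0` and `z₂₂` is central.
-/

noncomputable section
open ContinuousLinearMap Complex

lemma inner_e_left (j : ℕ) (f : H) : inner ℂ (e j) f = f j := by
  simpa [e] using lp.inner_single_left (𝕜 := ℂ) j (1 : ℂ) f

lemma e_apply (k j : ℕ) : (e k : ℕ → ℂ) j = if j = k then 1 else 0 := by
  simp [e, lp.single_apply, Pi.single_apply]

lemma Complex.mem_unitary_of_norm_eq_one {c : ℂ} (hc : ‖c‖ = 1) : c ∈ unitary ℂ := by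
  rw [Unitary.mem_iff, star_def, conj_mul', mul_conj', hc]
  norm_num

lemma smul_one_mem_unitary {E : Type*} [NormedAddCommGroup E] [InnerProductSpace ℂ E]
    [CompleteSpace E] {c : ℂ} (hc : ‖c‖ = 1) : c • (1 : E →L[ℂ] E) ∈ unitary (E →L[ℂ] E) :=
  Unitary.smul_mem_of_mem (Complex.mem_unitary_of_norm_eq_one hc) (one_mem _)

section WeightedShift

variable {T : H →L[ℂ] H} {w : ℕ → ℂ}

lemma adjoint_weightedShift_apply_e_apply (hT : ∀ k, T (e k) = w k • e (k + 1)) (m j : ℕ) :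
    (adjoint T (e m) : ℕ → ℂ) j = starRingEnd ℂ (w j) * (e m : ℕ → ℂ) (j + 1) := by
  rw [← inner_e_left, adjoint_inner_right, hT, inner_smul_left, inner_e_left]

lemma adjoint_weightedShift_apply_e_zero (hT : ∀ k, T (e k) = w k • e (k + 1)) :
    adjoint T (e 0) = 0 := by
  ext j
  simp [adjoint_weightedShift_apply_e_apply hT, e_apply]

lemma adjoint_weightedShift_apply_e_succ (hT : ∀ k, T (e k) = w k • e (k + 1)) (k : ℕ) :
    adjoint T (e (k + 1)) = starRingEnd ℂ (w k) • e k := by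
  ext j
  rw [adjoint_weightedShift_apply_e_apply hT, lp.coeFn_smul, Pi.smul_apply, smul_eq_mul, e_apply,
    e_apply]
  by_cases h : j = k
  · subst h; simp
  · simp [h]

lemma adjoint_mul_weightedShift_apply_e (hT : ∀ k, T (e k) = w k • e (k + 1)) (k : ℕ) :
    (adjoint T * T) (e k) = (‖w k‖ ^ 2 : ℂ) • e k := by
  rw [mul_apply_eq_comp, hT, map_smul, adjoint_weightedShift_apply_e_succ hT, smul_smul, mul_conj']

lemma weightedShift_mul_adjoint_apply_e_zero (hT : ∀ k, T (e k) = w k • e (k + 1)) :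
    (T * adjoint T) (e 0) = 0 := by
  rw [mul_apply_eq_comp, adjoint_weightedShift_apply_e_zero hT, map_zero]

lemma weightedShift_mul_adjoint_apply_e_succ (hT : ∀ k, T (e k) = w k • e (k + 1)) (k : ℕ) :
    (T * adjoint T) (e (k + 1)) = (‖w k‖ ^ 2 : ℂ) • e (k + 1) := by
  rw [mul_apply_eq_comp, adjoint_weightedShift_apply_e_succ hT, map_smul, hT, smul_smul, conj_mul']

lemma adjoint_mul_self_eq_of_weightedShift {q : ℝ}
    (hT : ∀ k, T (e k) = w k • e (k + 1)) (hw : ∀ k, ‖w k‖ ^ 2 = q⁻¹ ^ 2 * (1 - q ^ (4 * (k + 1)))) :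
    adjoint T * T = (q : ℂ) ^ 4 • (T * adjoint T) + ((q : ℂ)⁻¹ ^ 2 - (q : ℂ) ^ 2) • 1 := by
  have hTT : ∀ k, (T * adjoint T) (e k) = ((q⁻¹ ^ 2 * (1 - q ^ (4 * k)) : ℝ) : ℂ) • e k := by
    rintro (_ | k)
    · simp [weightedShift_mul_adjoint_apply_e_zero hT]
    · rw [weightedShift_mul_adjoint_apply_e_succ hT, ← ofReal_pow, hw]
  refine ext_e fun k => ?_
  rw [add_apply, smul_apply, smul_apply, one_apply_eq_self, adjoint_mul_weightedShift_apply_e hT,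
    ← ofReal_pow, hw, hTT, smul_smul, ← add_smul]
  congr 1
  push_cast
  field_simp
  ring

end WeightedShift

lemma norm_inv_mul_sqrt_sq {a x : ℝ} (ha : 0 ≤ a) (hx : 0 ≤ x) :
    ‖(a : ℂ)⁻¹ * (Real.sqrt x : ℂ)‖ ^ 2 = a⁻¹ ^ 2 * x := by
  rw [norm_mul, norm_inv, norm_real, norm_real, Real.norm_of_nonneg ha,
    Real.norm_of_nonneg (Real.sqrt_nonneg _), mul_pow, Real.sq_sqrt hx]

theorem stmt6 (q : ℝ) (hq : 0 < q) (hq1 : q < 1) (φ : ℝ)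
    (S C4 : H →L[ℂ] H)
    (hS : ∀ k, S (e k) = e (k + 1))
    (hC4 : ∀ k, C4 (e k) = ((Real.sqrt (1 - q ^ (4 * k)) : ℝ) : ℂ) • e k)
    (z11 z21 z22 : H →L[ℂ] H)
    (hz11 : z11 = (q⁻¹ : ℂ) • (C4 * S))
    (hz21 : z21 = 0)
    (hz22 : z22 = Complex.exp (φ * Complex.I) • (1 : H →L[ℂ] H)) :
    z11 * z21 = ((q : ℂ) ^ 2) • (z21 * z11)
    ∧ z21 * z22 = ((q : ℂ) ^ 2) • (z22 * z21)
    ∧ z11 * z22 - z22 * z11 = ((q : ℂ) * ((q : ℂ) ^ 2 - (q : ℂ)⁻¹ ^ 2)) • z21 ^ 2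
    ∧ adjoint z11 * z11
        = ((q : ℂ) ^ 4) • (z11 * adjoint z11)
          - ((q : ℂ) * ((q : ℂ)⁻¹ - (q : ℂ)) * (1 + (q : ℂ) ^ 2) ^ 2)
              • (z21 * adjoint z21)
          + (((q : ℂ)⁻¹ - (q : ℂ)) ^ 2 * (1 + (q : ℂ) ^ 2)) • (z22 * adjoint z22)
          + ((1 : ℂ) - (q : ℂ) ^ 4) • (1 : H →L[ℂ] H)
    ∧ adjoint z11 * z21
        = ((q : ℂ) ^ 2) • (z21 * adjoint z11)
          - ((q : ℂ) * ((q : ℂ)⁻¹ - (q : ℂ)) * ((q : ℂ)⁻¹ + (q : ℂ)))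
              • (z22 * adjoint z21)
    ∧ adjoint z11 * z22 = z22 * adjoint z11
    ∧ adjoint z21 * z21
        = ((q : ℂ) ^ 2) • (z21 * adjoint z21)
          - ((1 : ℂ) - (q : ℂ) ^ 2) • (z22 * adjoint z22)
          + ((1 : ℂ) - (q : ℂ) ^ 2) • (1 : H →L[ℂ] H)
    ∧ adjoint z21 * z22 = ((q : ℂ) ^ 2) • (z22 * adjoint z21)
    ∧ adjoint z22 * z22
        = ((q : ℂ) ^ 4) • (z22 * adjoint z22)
          + ((1 : ℂ) - (q : ℂ) ^ 4) • (1 : H →L[ℂ] H) := by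
  set w : ℕ → ℂ := fun k => (q : ℂ)⁻¹ * (Real.sqrt (1 - q ^ (4 * (k + 1))) : ℂ)
  have hshift : ∀ k, z11 (e k) = w k • e (k + 1) := fun k => by
    rw [hz11, smul_apply, mul_apply_eq_comp, hS, hC4, smul_smul]
  have hw : ∀ k, ‖w k‖ ^ 2 = q⁻¹ ^ 2 * (1 - q ^ (4 * (k + 1))) := fun k =>
    norm_inv_mul_sqrt_sq hq.le (sub_nonneg.2 (pow_le_one₀ hq.le hq1.le))
  have hunitary : z22 ∈ unitary (H →L[ℂ] H) := hz22 ▸ smul_one_mem_unitary (norm_exp_ofReal_mul_I φ)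
  have h22 : z22 * adjoint z22 = 1 := by
    rw [← star_eq_adjoint, Unitary.mul_star_self_of_mem hunitary]
  have h22' : adjoint z22 * z22 = 1 := by
    rw [← star_eq_adjoint, Unitary.star_mul_self_of_mem hunitary]
  have hcomm : ∀ A : H →L[ℂ] H, A * z22 = z22 * A := fun A => by
    rw [hz22, mul_smul_comm, smul_mul_assoc, mul_one, one_mul]
  subst hz21
  refine ⟨by simp, by simp, by simp [hcomm], ?_, by simp, hcomm _, ?_, by simp, ?_⟩
  · rw [adjoint_mul_self_eq_of_weightedShift hshift hw, h22]
    have hq0 : (q : ℂ) ≠ 0 := by exact_mod_cast hq.ne'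
    simp only [map_zero, mul_zero, smul_zero, sub_zero, add_assoc, ← add_smul]
    congr 2
    field_simp
    ring
  · rw [h22]; simp
  · rw [h22, h22', ← add_smul]; simp
end
end

section
/- Let 0 < q < 1 and φ ∈ ℝ. The assignment Π_φ(z₁₁) = q^{-1} z, Π_φ(z₂₁) = 0, Π_φ(z₂₂) = e^{iφ}·1 respects all nine defining relations of Pol(Mat₂^sym)_q in the *-algebra Pol(ℂ)_q defined by z*z = q⁴ zz* + 1−q⁴; hence Π_φ extends to a *-homomorphism Pol(Mat₂^sym)_q → Pol(ℂ)_q. -/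
/-!
Since `z₂₁ ↦ 0` and `z₂₂ ↦ e^{iφ}` is a central unitary, eight of the nine relations collapse to
`0 = 0` or `1 = q⁴ + (1 - q⁴)`. The remaining one is the relation of `Pol(ℂ)_q` for the rescaled
generator `q⁻¹ z`, whose constant term `q⁻²(1 - q⁴)` equals `(q⁻¹ - q)²(1 + q²) + (1 - q⁴)`.
-/

open Complex

section StarAlgebra

variable {R A : Type*} [CommSemiring R] [StarRing R] [Semiring A] [StarRing A] [Algebra R A]
  [StarModule R A]

lemma star_smul_one_mul_smul_one {c : R} (hc : star c * c = 1) :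
    star (c • (1 : A)) * (c • 1) = 1 := by
  rw [star_smul, star_one, smul_mul_smul_comm, hc, one_smul, mul_one]

lemma smul_one_mul_star_smul_one {c : R} (hc : star c * c = 1) :
    (c • (1 : A)) * star (c • 1) = 1 := by
  rw [star_smul, star_one, smul_mul_smul_comm, mul_comm, hc, one_smul, mul_one]

end StarAlgebra

lemma star_exp_ofReal_mul_I_mul_self (φ : ℝ) : star (exp (φ * I)) * exp (φ * I) = 1 := by
  rw [star_def, conj_mul', norm_exp_ofReal_mul_I, ofReal_one, one_pow]

section ComplexStarAlgebra

variable {A : Type*} [Ring A] [Algebra ℂ A] [StarRing A] [StarModule ℂ A]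

lemma star_ofReal_smul (r : ℝ) (z : A) : star ((r : ℂ) • z) = (r : ℂ) • star z := by
  rw [star_smul, star_def, conj_ofReal]

lemma star_mul_self_ofReal_smul {q : ℝ} {z : A}
    (hz : star z * z = ((q : ℂ) ^ 4) • (z * star z) + ((1 : ℂ) - (q : ℂ) ^ 4) • (1 : A))
    (r : ℝ) :
    star ((r : ℂ) • z) * ((r : ℂ) • z)
      = ((q : ℂ) ^ 4) • (((r : ℂ) • z) * star ((r : ℂ) • z))
        + ((r : ℂ) ^ 2 * ((1 : ℂ) - (q : ℂ) ^ 4)) • (1 : A) := by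
  simp only [star_ofReal_smul, smul_mul_smul_comm, hz, smul_add, smul_smul]
  module

end ComplexStarAlgebra

theorem stmt7_general (q : ℝ) (hq : 0 < q) (φ : ℝ)
    (A : Type*) [Ring A] [Algebra ℂ A] [StarRing A] [StarModule ℂ A]
    (z : A)
    (hz : star z * z = ((q : ℂ) ^ 4) • (z * star z) + ((1 : ℂ) - (q : ℂ) ^ 4) • (1 : A))
    (w11 w21 w22 : A)
    (hw11 : w11 = (q⁻¹ : ℂ) • z)
    (hw21 : w21 = 0)
    (hw22 : w22 = Complex.exp (φ * Complex.I) • (1 : A)) :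
    w11 * w21 = ((q : ℂ) ^ 2) • (w21 * w11)
    ∧ w21 * w22 = ((q : ℂ) ^ 2) • (w22 * w21)
    ∧ w11 * w22 - w22 * w11 = ((q : ℂ) * ((q : ℂ) ^ 2 - (q : ℂ)⁻¹ ^ 2)) • (w21 * w21)
    ∧ star w11 * w11
        = ((q : ℂ) ^ 4) • (w11 * star w11)
          - ((q : ℂ) * ((q : ℂ)⁻¹ - (q : ℂ)) * (1 + (q : ℂ) ^ 2) ^ 2) • (w21 * star w21)
          + (((q : ℂ)⁻¹ - (q : ℂ)) ^ 2 * (1 + (q : ℂ) ^ 2)) • (w22 * star w22)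
          + ((1 : ℂ) - (q : ℂ) ^ 4) • (1 : A)
    ∧ star w11 * w21
        = ((q : ℂ) ^ 2) • (w21 * star w11)
          - ((q : ℂ) * ((q : ℂ)⁻¹ - (q : ℂ)) * ((q : ℂ)⁻¹ + (q : ℂ))) • (w22 * star w21)
    ∧ star w11 * w22 = w22 * star w11
    ∧ star w21 * w21
        = ((q : ℂ) ^ 2) • (w21 * star w21)
          - ((1 : ℂ) - (q : ℂ) ^ 2) • (w22 * star w22)
          + ((1 : ℂ) - (q : ℂ) ^ 2) • (1 : A)
    ∧ star w21 * w22 = ((q : ℂ) ^ 2) • (w22 * star w21)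
    ∧ star w22 * w22
        = ((q : ℂ) ^ 4) • (w22 * star w22) + ((1 : ℂ) - (q : ℂ) ^ 4) • (1 : A) := by
  have hq0 : (q : ℂ) ≠ 0 := ofReal_ne_zero.mpr hq.ne'
  have hw11' : star w11 * w11
      = ((q : ℂ) ^ 4) • (w11 * star w11) + ((q : ℂ)⁻¹ ^ 2 * ((1 : ℂ) - (q : ℂ) ^ 4)) • (1 : A) := by
    rw [hw11, ← ofReal_inv]
    exact star_mul_self_ofReal_smul hz q⁻¹
  have hu := star_exp_ofReal_mul_I_mul_self φ
  have hw22_unitary : star w22 * w22 = 1 := hw22 ▸ star_smul_one_mul_smul_one hu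
  have hw22_unitary' : w22 * star w22 = 1 := hw22 ▸ smul_one_mul_star_smul_one hu
  have hw22_comm (x : A) : Commute w22 x := hw22 ▸ (Commute.one_left x).smul_left _
  subst hw21
  simp only [hw22_unitary, hw22_unitary', star_zero, mul_zero, zero_mul, smul_zero, sub_zero,
    zero_sub, (hw22_comm w11).eq, sub_self, (hw22_comm (star w11)).eq, true_and]
  refine ⟨?_, by module, by module⟩
  rw [hw11', add_assoc, ← add_smul]
  congr 2
  field_simp
  ring

/-- The assignment Π_φ(z₁₁) = q⁻¹ z, Π_φ(z₂₁) = 0, Π_φ(z₂₂) = e^{iφ}·1 respects the nine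
defining relations of Pol(Mat₂^sym)_q in any unital *-algebra Pol(ℂ)_q-type situation,
i.e. whenever z satisfies z*z = q⁴ zz* + (1-q⁴)·1; hence Π_φ extends to a *-homomorphism. -/
theorem stmt7 (q : ℝ) (hq : 0 < q) (hq1 : q < 1) (φ : ℝ)
    (A : Type*) [Ring A] [Algebra ℂ A] [StarRing A] [StarModule ℂ A]
    (z : A)
    (hz : star z * z = ((q : ℂ) ^ 4) • (z * star z) + ((1 : ℂ) - (q : ℂ) ^ 4) • (1 : A))
    (w11 w21 w22 : A)
    (hw11 : w11 = (q⁻¹ : ℂ) • z)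
    (hw21 : w21 = 0)
    (hw22 : w22 = Complex.exp (φ * Complex.I) • (1 : A)) :
    w11 * w21 = ((q : ℂ) ^ 2) • (w21 * w11)
    ∧ w21 * w22 = ((q : ℂ) ^ 2) • (w22 * w21)
    ∧ w11 * w22 - w22 * w11 = ((q : ℂ) * ((q : ℂ) ^ 2 - (q : ℂ)⁻¹ ^ 2)) • (w21 * w21)
    ∧ star w11 * w11
        = ((q : ℂ) ^ 4) • (w11 * star w11)
          - ((q : ℂ) * ((q : ℂ)⁻¹ - (q : ℂ)) * (1 + (q : ℂ) ^ 2) ^ 2) • (w21 * star w21)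
          + (((q : ℂ)⁻¹ - (q : ℂ)) ^ 2 * (1 + (q : ℂ) ^ 2)) • (w22 * star w22)
          + ((1 : ℂ) - (q : ℂ) ^ 4) • (1 : A)
    ∧ star w11 * w21
        = ((q : ℂ) ^ 2) • (w21 * star w11)
          - ((q : ℂ) * ((q : ℂ)⁻¹ - (q : ℂ)) * ((q : ℂ)⁻¹ + (q : ℂ))) • (w22 * star w21)
    ∧ star w11 * w22 = w22 * star w11
    ∧ star w21 * w21
        = ((q : ℂ) ^ 2) • (w21 * star w21)
          - ((1 : ℂ) - (q : ℂ) ^ 2) • (w22 * star w22)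
          + ((1 : ℂ) - (q : ℂ) ^ 2) • (1 : A)
    ∧ star w21 * w22 = ((q : ℂ) ^ 2) • (w22 * star w21)
    ∧ star w22 * w22
        = ((q : ℂ) ^ 4) • (w22 * star w22) + ((1 : ℂ) - (q : ℂ) ^ 4) • (1 : A) :=
  stmt7_general q hq φ A z hz w11 w21 w22 hw11 hw21 hw22
end

section
/- Let 0 < q < 1 and let X ⊆ 𝕋 be a subset of the unit circle. If for every θ ∈ ℝ one has sup { |ζ + e^{iθ}| : ζ ∈ ⋃_{k≥0} q^{2k} X } = 2, then X is dense in 𝕋. -/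
/-! Fix `w` on the circle and write `w = exp (iθ)`. Since `|q^{2k} x + w| ≤ q² + 1 < 2` for `k ≥ 1`,
values of `|ζ + w|` close to `2` can only come from `ζ = x ∈ X` itself, and for unit vectors the
parallelogram law gives `|x - w|² = 4 - |x + w|² ≤ 4 (2 - |x + w|)`. -/

open Complex

theorem Real.exists_lt_of_nonneg_of_lt_sSup {s : Set ℝ} {b : ℝ} (hb₀ : 0 ≤ b) (hb : b < sSup s) :
    ∃ a ∈ s, b < a := by
  rcases s.eq_empty_or_nonempty with rfl | hs
  · exact absurd (Real.sSup_empty ▸ hb) hb₀.not_gt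
  · exact exists_lt_of_lt_csSup hs hb

theorem norm_sub_sq_le_of_norm_eq_one {E : Type*} [NormedAddCommGroup E] [InnerProductSpace ℝ E]
    {x w : E} (hx : ‖x‖ = 1) (hw : ‖w‖ = 1) : ‖x - w‖ ^ 2 ≤ 4 * (2 - ‖x + w‖) := by
  have hpar := parallelogram_law_with_norm ℝ x w
  have hle : ‖x + w‖ ≤ 2 := by linarith [norm_add_le x w]
  rw [hx, hw] at hpar
  nlinarith [norm_nonneg (x + w)]

theorem norm_pow_mul_add_le {𝕜 : Type*} [NormedDivisionRing 𝕜] {c x z : 𝕜} (hc : ‖c‖ ≤ 1)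
    (hx : ‖x‖ = 1) {k : ℕ} (hk : k ≠ 0) : ‖c ^ k * x + z‖ ≤ ‖c‖ + ‖z‖ := calc
  ‖c ^ k * x + z‖ ≤ ‖c‖ ^ k + ‖z‖ := by simpa [hx] using norm_add_le (c ^ k * x) z
  _ ≤ ‖c‖ + ‖z‖ := by gcongr; exact pow_le_of_le_one (norm_nonneg c) hc hk

theorem Complex.exp_arg_mul_I_of_norm_eq_one {w : ℂ} (hw : ‖w‖ = 1) : exp (arg w * I) = w := by
  simpa [hw] using norm_mul_exp_arg_mul_I w

theorem stmt9 (q : ℝ) (hq : 0 < q) (hq1 : q < 1)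
    (X : Set ℂ) (hX : X ⊆ {w : ℂ | ‖w‖ = 1})
    (hsup : ∀ θ : ℝ,
      sSup {r : ℝ | ∃ x ∈ X, ∃ k : ℕ,
        r = ‖(q : ℂ) ^ (2 * k) * x + Complex.exp (θ * Complex.I)‖} = 2) :
    {w : ℂ | ‖w‖ = 1} ⊆ closure X := by
  intro w hw
  rw [Metric.mem_closure_iff]
  intro ε hε
  set t := max (q ^ 2 + 1) (2 - ε ^ 2 / 4)
  have ht : t < 2 := max_lt (by nlinarith) (by linarith [pow_pos hε 2])
  obtain ⟨_, ⟨x, hxX, k, rfl⟩, htr⟩ := Real.exists_lt_of_nonneg_of_lt_sSup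
    (by positivity : 0 ≤ t) ((hsup (arg w)).symm ▸ ht)
  rw [exp_arg_mul_I_of_norm_eq_one hw] at htr
  have hx : ‖x‖ = 1 := hX hxX
  obtain rfl | hk := eq_or_ne k 0
  · rw [mul_zero, pow_zero, one_mul] at htr
    have hsq : ‖x - w‖ ^ 2 < ε ^ 2 := by
      linarith [norm_sub_sq_le_of_norm_eq_one hx hw, le_max_right (q ^ 2 + 1) (2 - ε ^ 2 / 4)]
    refine ⟨x, hxX, ?_⟩
    rw [dist_comm, dist_eq_norm]
    exact lt_of_pow_lt_pow_left₀ 2 hε.le hsq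
  · have hq2 : ‖(q : ℂ) ^ 2‖ = q ^ 2 := by simp
    have := norm_pow_mul_add_le (z := w) (hq2.trans_le (by nlinarith)) hx hk
    rw [← pow_mul, hq2, hw] at this
    linarith [le_max_left (q ^ 2 + 1) (2 - ε ^ 2 / 4)]
end

section
/- Let 0 < q < 1. In ℂ[Mat₂^sym]_q with q-determinant det_q^sym z = z₂₂z₁₁ − q^{-1}z₂₁², the element det_q^sym z commutes with z₂₁ and satisfies z₁₁ (det_q^sym z) = (det_q^sym z) z₁₁ and z₂₂ (det_q^sym z) = (det_q^sym z) z₂₂; i.e., det_q^sym z is central in ℂ[Mat₂^sym]_q. -/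
/-!
Write `x, y, z` for `z₁₁, z₂₁, z₂₂` and `d = z x - r y²`. Since `x` and `z` `s`-commute with `y`
from opposite sides, the factors `s` cancel in `(z x) y = y (z x)`. Moving `x` past `d` (or `d`
past `z`) produces `c y²` from the third relation and `s²` from passing `y²`; these cancel
exactly when `c - r s² = -r`, which for `s = q²`, `c = q (q² - q⁻²)`, `r = q⁻¹` is an identity.
-/

noncomputable section

section QCommuting

variable {K A : Type*} [CommRing K] [Ring A] [Algebra K A] {s c r : K} {x y z : A}

theorem mul_mul_self_eq_smul_of_mul_eq_smul (h : x * y = s • (y * x)) :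
    x * (y * y) = (s ^ 2) • (y * y * x) := by
  rw [← mul_assoc, h, smul_mul_assoc, mul_assoc, h, mul_smul_comm, smul_smul, ← mul_assoc, sq]

theorem mul_self_mul_eq_smul_of_mul_eq_smul (h : y * z = s • (z * y)) :
    y * y * z = (s ^ 2) • (z * (y * y)) := by
  rw [mul_assoc, h, mul_smul_comm, ← mul_assoc, h, smul_mul_assoc, smul_smul, mul_assoc, sq]

theorem commute_mul_of_mul_eq_smul (h₁ : x * y = s • (y * x)) (h₂ : y * z = s • (z * y)) :
    Commute (z * x) y := by
  rw [Commute, SemiconjBy, mul_assoc, h₁, mul_smul_comm, ← mul_assoc, ← smul_mul_assoc, ← h₂,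
    mul_assoc]

theorem commute_sub_smul_mul_self (r : K) (h₁ : x * y = s • (y * x)) (h₂ : y * z = s • (z * y)) :
    Commute (z * x - r • (y * y)) y :=
  (commute_mul_of_mul_eq_smul h₁ h₂).sub_left (((Commute.refl y).mul_left (.refl y)).smul_left r)

theorem mul_sub_smul_mul_self_comm_left (h₁ : x * y = s • (y * x))
    (h₃ : x * z - z * x = c • (y * y)) (hc : c - r * s ^ 2 = -r) :
    x * (z * x - r • (y * y)) = (z * x - r • (y * y)) * x := by
  have hxz : x * z = z * x + c • (y * y) := by rw [← h₃, add_sub_cancel]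
  rw [mul_sub, ← mul_assoc, hxz, mul_smul_comm, mul_mul_self_eq_smul_of_mul_eq_smul h₁, smul_smul,
    add_mul, smul_mul_assoc, sub_mul, smul_mul_assoc, add_sub_assoc, ← sub_smul, hc, neg_smul,
    sub_eq_add_neg]

theorem mul_sub_smul_mul_self_comm_right (h₂ : y * z = s • (z * y))
    (h₃ : x * z - z * x = c • (y * y)) (hc : c - r * s ^ 2 = -r) :
    z * (z * x - r • (y * y)) = (z * x - r • (y * y)) * z := by
  have hxz : x * z = z * x + c • (y * y) := by rw [← h₃, add_sub_cancel]
  rw [sub_mul, mul_assoc, hxz, smul_mul_assoc, mul_self_mul_eq_smul_of_mul_eq_smul h₂, smul_smul,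
    mul_add, mul_smul_comm, mul_sub, mul_smul_comm, add_sub_assoc, ← sub_smul, hc,
    neg_smul, sub_eq_add_neg]

end QCommuting

theorem mul_sq_sub_inv_sq_sub_inv_mul_sq_sq {K : Type*} [Field K] (q : K) :
    q * (q ^ 2 - q⁻¹ ^ 2) - q⁻¹ * (q ^ 2) ^ 2 = -q⁻¹ := by
  rcases eq_or_ne q 0 with rfl | hq
  · simp
  · field_simp
    ring

theorem stmt18_general (q : ℝ)
    (A : Type*) [Ring A] [Algebra ℂ A]
    (z11 z21 z22 : A)
    (h1 : z11 * z21 = ((q : ℂ) ^ 2) • (z21 * z11))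
    (h2 : z21 * z22 = ((q : ℂ) ^ 2) • (z22 * z21))
    (h3 : z11 * z22 - z22 * z11 = ((q : ℂ) * ((q : ℂ) ^ 2 - (q : ℂ)⁻¹ ^ 2)) • (z21 * z21))
    (d : A) (hd : d = z22 * z11 - (q⁻¹ : ℂ) • (z21 * z21)) :
    d * z21 = z21 * d ∧ z11 * d = d * z11 ∧ z22 * d = d * z22 := by
  have hc := mul_sq_sub_inv_sq_sub_inv_mul_sq_sq (q : ℂ)
  subst hd
  exact ⟨commute_sub_smul_mul_self _ h1 h2, mul_sub_smul_mul_self_comm_left h1 h3 hc,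
    mul_sub_smul_mul_self_comm_right h2 h3 hc⟩

/-- In ℂ[Mat₂^sym]_q the q-determinant det_q^sym z = z₂₂z₁₁ − q⁻¹z₂₁² is central: this holds
in any ℂ-algebra whose elements z₁₁, z₂₁, z₂₂ satisfy the three defining relations. -/
theorem stmt18 (q : ℝ) (hq : 0 < q) (hq1 : q < 1)
    (A : Type*) [Ring A] [Algebra ℂ A]
    (z11 z21 z22 : A)
    (h1 : z11 * z21 = ((q : ℂ) ^ 2) • (z21 * z11))
    (h2 : z21 * z22 = ((q : ℂ) ^ 2) • (z22 * z21))
    (h3 : z11 * z22 - z22 * z11 = ((q : ℂ) * ((q : ℂ) ^ 2 - (q : ℂ)⁻¹ ^ 2)) • (z21 * z21))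
    (d : A) (hd : d = z22 * z11 - (q⁻¹ : ℂ) • (z21 * z21)) :
    d * z21 = z21 * d ∧ z11 * d = d * z11 ∧ z22 * d = d * z22 :=
  stmt18_general q A z11 z21 z22 h1 h2 h3 d hd
end
end
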